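/- Let F = A[T₁,…,T_r] be a polynomial ring over a ring A in which n! is invertible, and let W ⊂ F be the A-submodule spanned by monomials of total degree less than n. Then the ideal of norms I_W equals the ideal of norms I_F in Γⁿ_A(F). -/

import Mathlib

/-!
Every generator `δ(x, y)` of `I_F` is brought into `I_W` by induction on the total degree of the
entries of `x` and `y`. Since `δ` is multilinear in `x` and in `y`, an entry of degree `≥ n` may
be taken to be a monomial, and polarization (`n!` is a unit) writes such a monomial as an
`A`-combination of products `L ^ n * g` with `L` linear and `deg g ≤ deg - n`. Replacing the entry
by `L ^ (n - #S) * g` and multiplying the entries indexed by `S` by `L`, the alternating sum over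
all `S` vanishes; grouping by `#S = k` and using the expansion of `q k L * p1` turns this into
`δ(…, L ^ n * g, …) = -∑_{k ≥ 1} (-1) ^ k q k L * δ(…, L ^ (n - k) * g, …)`, whose terms have
smaller degree.
-/

/-- `δ(x,y) ∈ Γⁿ_A(F)`, where `p1` records the external product `γ¹(z 1) * ⋯ * γ¹(z n)`. -/
noncomputable def extDelta {A F Γn : Type*} [CommRing A] [CommRing F] [Algebra A F]
    [CommRing Γn] [Algebra A Γn] {n : ℕ}
    (p1 : MultilinearMap A (fun _ : Fin n => F) Γn) (x y : Fin n → F) : Γn :=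
  ∑ σ : Equiv.Perm (Fin n),
    ((Equiv.Perm.sign σ : ℤ)) • p1 (fun i => x i * y (σ i))

/-- The ideal of norms `I_V ⊆ Γⁿ_A(F)` associated to an `A`-submodule `V ⊆ F`. -/
noncomputable def normIdeal {A F Γn : Type*} [CommRing A] [CommRing F] [Algebra A F]
    [CommRing Γn] [Algebra A Γn] {n : ℕ}
    (p1 : MultilinearMap A (fun _ : Fin n => F) Γn) (V : Submodule A F) : Ideal Γn :=
  Ideal.span {t | ∃ x y : Fin n → F,
    (∀ i, x i ∈ V) ∧ (∀ i, y i ∈ V) ∧ t = extDelta p1 x y}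

open Finset Function
open scoped Nat

theorem sum_neg_one_pow_smul_sum_compl_pow {R ι : Type*} [CommRing R] [Fintype ι]
    [DecidableEq ι] (a : ι → R) :
    ∑ t : Finset ι, (-1 : ℤ) ^ #t • (∑ i ∈ tᶜ, a i) ^ Fintype.card ι =
      (Fintype.card ι)! • ∏ i, a i := by
  -- inclusion–exclusion over the maps `p : ι → ι`, with `S i` the maps missing `i`;
  -- the maps missing no point are the permutations
  set S : ι → Finset (ι → ι) := fun i => {p | i ∉ Set.range p}
  have h_inf (t : Finset ι) : t.inf S = Fintype.piFinset fun _ => tᶜ := by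
    ext p
    simp [S, Finset.mem_inf]
    grind
  have h_bij : (univ.inf fun i => (S i)ᶜ) = ({p | p.Bijective} : Finset (ι → ι)) := by
    ext p
    simp only [Finset.mem_inf, mem_filter_univ, mem_univ, true_implies, mem_compl, S, not_not,
      ← Finite.surjective_iff_bijective]
    rfl
  have h := inclusion_exclusion_sum_inf_compl univ S fun p => ∏ k, a (p k)
  simp only [h_inf, powerset_univ, ← prod_univ_sum, prod_const, card_univ] at h
  rw [← h, h_bij, sum_subtype _ fun p => mem_filter_univ p,
    ← Fintype.sum_equiv (Equiv.bijectiveEquiv (α := ι) (β := ι)).symm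
      (fun σ : Equiv.Perm ι => ∏ k, a (σ k)) _ fun _ => rfl]
  simp [Equiv.prod_comp, Fintype.card_perm]

theorem prod_mem_span_pow_sum {A R ι : Type*} [CommRing A] [CommRing R] [Algebra A R]
    [Fintype ι] (hfac : IsUnit ((Fintype.card ι)! : A)) (a : ι → R) :
    ∏ i, a i ∈
      Submodule.span A (Set.range fun s : Finset ι => (∑ i ∈ s, a i) ^ Fintype.card ι) := by
  classical
  have h : ∏ i, a i = ((hfac.unit⁻¹ : Aˣ) : A) •
      ∑ t : Finset ι, (-1 : ℤ) ^ #t • (∑ i ∈ tᶜ, a i) ^ Fintype.card ι := by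
    rw [sum_neg_one_pow_smul_sum_compl_pow, ← Nat.cast_smul_eq_nsmul A, smul_smul,
      IsUnit.val_inv_mul, one_smul]
  rw [h]
  exact Submodule.smul_mem _ _ (Submodule.sum_mem _ fun t _ =>
    Submodule.smul_of_tower_mem _ _ (Submodule.subset_span ⟨tᶜ, rfl⟩))

namespace MvPolynomial

variable {σ A : Type*} [CommRing A]

theorem monomial_mem_span_pow_mul {n : ℕ} (hfac : IsUnit (n ! : A)) {d : σ →₀ ℕ}
    (hd : n ≤ d.sum fun _ e => e) (c : A) :
    monomial d c ∈ Submodule.span A {f : MvPolynomial σ A | ∃ L g : MvPolynomial σ A,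
      L.totalDegree ≤ 1 ∧ g.totalDegree + n ≤ (d.sum fun _ e => e) ∧ f = L ^ n * g} := by
  obtain ⟨g, hgd, hg⟩ := Finsupp.exists_le_degree_eq d n hd
  have hcard : Fintype.card (Σ k : g.support, Fin (g k)) = n := by
    simp [Fintype.card_sigma, ← hg, Finsupp.degree_apply, sum_attach g.support g]
  have hprod :
      ∏ i : Σ k : g.support, Fin (g k), (X i.1.1 : MvPolynomial σ A) = monomial g 1 := by
    simp [Fintype.prod_sigma, prod_attach g.support fun k => (X k : MvPolynomial σ A) ^ g k,
      prod_X_pow_eq_monomial]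
  have h := Submodule.apply_mem_span_image_of_mem_span
    (LinearMap.mulRight A (monomial (d - g) c))
    (prod_mem_span_pow_sum (by rwa [hcard]) fun i : Σ k : g.support, Fin (g k) =>
      (X i.1.1 : MvPolynomial σ A))
  rw [hcard, hprod, LinearMap.mulRight_apply, monomial_mul, one_mul,
    add_tsub_cancel_of_le hgd] at h
  refine Submodule.span_mono ?_ h
  rintro _ ⟨_, ⟨s, rfl⟩, rfl⟩
  refine ⟨_, _, (IsHomogeneous.sum _ _ _ fun i _ => isHomogeneous_X A i.1.1).totalDegree_le,
    ?_, rfl⟩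
  calc _ ≤ ((d - g).sum fun _ e => e) + n := Nat.add_le_add_right (totalDegree_monomial_le _ _) n
    _ = Finsupp.degree (d - g + g) := by rw [map_add, hg]; rfl
    _ = _ := by rw [tsub_add_cancel_of_le hgd]; rfl

theorem mem_of_monomial_coeff_mem {N : Submodule A (MvPolynomial σ A)} {p : MvPolynomial σ A}
    (h : ∀ d ∈ p.support, monomial d (coeff d p) ∈ N) : p ∈ N := by
  rw [← p.support_sum_monomial_coeff]
  exact Submodule.sum_mem _ h

theorem mem_span_monomial_of_totalDegree_lt {n : ℕ} {p : MvPolynomial σ A}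
    (hp : p.totalDegree < n) :
    p ∈ Submodule.span A {m | ∃ d : σ →₀ ℕ, (d.sum fun _ e => e) < n ∧ m = monomial d 1} :=
  mem_of_monomial_coeff_mem fun d hd => by
    rw [← mul_one (coeff d p), ← smul_eq_mul, ← smul_monomial]
    exact Submodule.smul_mem _ _
      (Submodule.subset_span ⟨d, (le_totalDegree hd).trans_lt hp, rfl⟩)

theorem sum_totalDegree_update_lt {ι : Type*} [Fintype ι] [DecidableEq ι]
    {x : ι → MvPolynomial σ A} {j : ι} {z : MvPolynomial σ A}
    (h : z.totalDegree < (x j).totalDegree) :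
    ∑ i, (update x j z i).totalDegree < ∑ i, (x i).totalDegree :=
  sum_lt_sum (fun i _ => by rcases eq_or_ne i j with rfl | hij <;> simp [h.le, *])
    ⟨j, mem_univ j, by simpa⟩

end MvPolynomial

section MulExpansion

variable {F Γ : Type*} [CommRing F] [CommRing Γ] {n : ℕ}

theorem sum_neg_one_pow_smul_update_pow_mul {M : Type*} [AddCommGroup M]
    (Ψ : (Fin n → F) → M) (x : Fin n → F) (j : Fin n) (L g : F) :
    ∑ S : Finset (Fin n), (-1 : ℤ) ^ #S •
      Ψ (fun i => (if i ∈ S then L else 1) * update x j (L ^ (n - #S) * g) i) = 0 := by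
  -- the summands for `S` and `insert j S` cancel
  rw [← powerset_univ, ← insert_erase (mem_univ j), sum_powerset_insert (notMem_erase j _),
    ← sum_add_distrib]
  refine sum_eq_zero fun S hS => ?_
  have hjS : j ∉ S := fun h => notMem_erase j _ (mem_powerset.mp hS h)
  have hS_lt : #S < n := by
    have := card_le_card (mem_powerset.mp hS)
    rw [card_erase_of_mem (mem_univ j), card_univ, Fintype.card_fin] at this
    have := j.pos
    omega
  have h_tuple : (fun i => (if i ∈ insert j S then L else 1) *
      update x j (L ^ (n - #(insert j S)) * g) i) =
      fun i => (if i ∈ S then L else 1) * update x j (L ^ (n - #S) * g) i := by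
    funext i
    rcases eq_or_ne i j with rfl | hij
    · rw [card_insert_of_notMem hjS, update_self, update_self, if_pos (mem_insert_self _ _),
        if_neg hjS, one_mul, ← mul_assoc, ← pow_succ', Nat.sub_add_eq,
        Nat.sub_add_cancel (by omega)]
    · simp [hij]
  rw [h_tuple, card_insert_of_notMem hjS, pow_succ, mul_neg_one, neg_smul, add_neg_cancel]

/-- The expansion of Proposition 1.7, satisfied by `Φ = p1` when `q c f = γᶜ(f) * γ^{n-c}(1)`. -/
def HasMulExpansion (q : ℕ → F → Γ) (Φ : (Fin n → F) → Γ) : Prop :=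
  ∀ c ≤ n, ∀ f w, q c f * Φ w =
    ∑ S ∈ univ.powersetCard c, Φ fun i => (if i ∈ S then f else 1) * w i

namespace HasMulExpansion

variable {q : ℕ → F → Γ} {Φ : (Fin n → F) → Γ}

theorem sum_zsmul {κ : Type*} (s : Finset κ) (m : κ → ℤ) {Ψ : κ → (Fin n → F) → Γ}
    (h : ∀ a ∈ s, HasMulExpansion q (Ψ a)) :
    HasMulExpansion q fun w => ∑ a ∈ s, m a • Ψ a w := by
  intro c hc f w
  simp only [mul_sum, mul_smul_comm]
  rw [sum_comm]
  exact sum_congr rfl fun a ha => by rw [h a ha c hc, smul_sum]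

theorem comp_mul_left (h : HasMulExpansion q Φ) (v : Fin n → F) :
    HasMulExpansion q fun w => Φ fun i => v i * w i := by
  intro c hc f w
  simp only [h c hc f, mul_left_comm (v _)]

theorem comp_mul_right (h : HasMulExpansion q Φ) (v : Fin n → F) :
    HasMulExpansion q fun w => Φ fun i => w i * v i := by
  intro c hc f w
  simp only [h c hc f, mul_assoc]

theorem comp_perm (h : HasMulExpansion q Φ) (σ : Equiv.Perm (Fin n)) :
    HasMulExpansion q fun w => Φ fun i => w (σ i) := by
  intro c hc f w
  rw [h c hc f]
  exact sum_equiv σ.finsetCongr (fun S => by simp) fun S _ => by simp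

theorem sum_range_neg_one_pow_smul (hΦ : HasMulExpansion q Φ) (x : Fin n → F) (j : Fin n)
    (L g : F) :
    ∑ k ∈ range (n + 1), (-1 : ℤ) ^ k • (q k L * Φ (update x j (L ^ (n - k) * g))) = 0 := by
  rw [← sum_neg_one_pow_smul_update_pow_mul Φ x j L g, ← powerset_univ, sum_powerset,
    card_univ, Fintype.card_fin]
  refine sum_congr rfl fun k hk => ?_
  rw [hΦ k (Nat.lt_succ_iff.mp (mem_range.mp hk)), smul_sum]
  exact sum_congr rfl fun S hS => by rw [mem_powersetCard_univ.mp hS]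

theorem mem_of_pow_mul (hΦ : HasMulExpansion q Φ) (I : Ideal Γ) (x : Fin n → F) (j : Fin n)
    (L g : F) (h : ∀ m < n, Φ (update x j (L ^ m * g)) ∈ I) :
    Φ (update x j (L ^ n * g)) ∈ I := by
  have key := hΦ.sum_range_neg_one_pow_smul x j L g
  rw [sum_range_succ', hΦ 0 n.zero_le] at key
  simp only [powersetCard_zero, sum_singleton, notMem_empty, if_false, one_mul, pow_zero,
    one_smul, Nat.sub_zero] at key
  rw [← neg_eq_of_add_eq_zero_right key]
  refine neg_mem (sum_mem fun k hk => zsmul_mem (Ideal.mul_mem_left _ _ (h _ ?_)) _)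
  have := mem_range.mp hk
  omega

end HasMulExpansion

end MulExpansion

section ExtDelta

variable {A F Γ : Type*} [CommRing A] [CommRing F] [Algebra A F] [CommRing Γ] [Algebra A Γ]
  {n : ℕ} (p1 : MultilinearMap A (fun _ : Fin n => F) Γ)

theorem normIdeal_mono {V V' : Submodule A F} (h : V ≤ V') :
    normIdeal p1 V ≤ normIdeal p1 V' :=
  Ideal.span_mono fun _ ⟨x, y, hx, hy, ht⟩ => ⟨x, y, fun i => h (hx i), fun i => h (hy i), ht⟩

noncomputable def extDeltaLeft (y : Fin n → F) : MultilinearMap A (fun _ : Fin n => F) Γ :=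
  ∑ σ : Equiv.Perm (Fin n),
    (Equiv.Perm.sign σ : ℤ) • p1.compLinearMap fun i => LinearMap.mulRight A (y (σ i))

noncomputable def extDeltaRight (x : Fin n → F) : MultilinearMap A (fun _ : Fin n => F) Γ :=
  ∑ σ : Equiv.Perm (Fin n),
    (Equiv.Perm.sign σ : ℤ) • (p1.compLinearMap fun i => LinearMap.mulLeft A (x i)).domDomCongr σ

theorem extDeltaLeft_apply (x y : Fin n → F) : extDeltaLeft p1 y x = extDelta p1 x y := by
  simp [extDeltaLeft, extDelta]

theorem extDeltaRight_apply (x y : Fin n → F) : extDeltaRight p1 x y = extDelta p1 x y := by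
  simp [extDeltaRight, extDelta]

variable {p1} {q : ℕ → F → Γ}

theorem hasMulExpansion_extDeltaLeft (hq : HasMulExpansion q p1) (y : Fin n → F) :
    HasMulExpansion q (extDeltaLeft p1 y) := by
  rw [show ⇑(extDeltaLeft p1 y) = fun x => extDelta p1 x y from
    funext fun x => extDeltaLeft_apply p1 x y]
  exact HasMulExpansion.sum_zsmul _ _ fun σ _ => hq.comp_mul_right _

theorem hasMulExpansion_extDeltaRight (hq : HasMulExpansion q p1) (x : Fin n → F) :
    HasMulExpansion q (extDeltaRight p1 x) := by
  rw [show ⇑(extDeltaRight p1 x) = fun y => extDelta p1 x y from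
    funext (extDeltaRight_apply p1 x)]
  exact HasMulExpansion.sum_zsmul _ _ fun σ _ => (hq.comp_mul_left x).comp_perm σ

end ExtDelta

section Reduction

open MvPolynomial

variable {σ A Γ : Type*} [CommRing A] [CommRing Γ] [Algebra A Γ] {n : ℕ}
  {q : ℕ → MvPolynomial σ A → Γ}

theorem HasMulExpansion.mem_of_forall_totalDegree_lt
    {Φ : MultilinearMap A (fun _ : Fin n => MvPolynomial σ A) Γ} (hΦ : HasMulExpansion q Φ)
    (hfac : IsUnit (n ! : A)) (I : Ideal Γ) (x : Fin n → MvPolynomial σ A) (j : Fin n)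
    (hj : n ≤ (x j).totalDegree)
    (h : ∀ z : MvPolynomial σ A, z.totalDegree < (x j).totalDegree → Φ (update x j z) ∈ I) :
    Φ x ∈ I := by
  classical
  suffices x j ∈ (I.restrictScalars A).comap (Φ.toLinearMap x j) by simpa using this
  refine mem_of_monomial_coeff_mem fun d hd => ?_
  rcases lt_or_ge (d.sum fun _ e => e) (x j).totalDegree with hlt | hge
  · exact h _ ((totalDegree_monomial_le _ _).trans_lt hlt)
  refine Submodule.span_le.mpr ?_ (monomial_mem_span_pow_mul hfac (hj.trans hge) _)
  rintro _ ⟨L, g, hL, hg, rfl⟩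
  refine hΦ.mem_of_pow_mul I x j L g fun m hm => h _ ?_
  have hLm := Nat.mul_le_mul_left m hL
  calc (L ^ m * g).totalDegree ≤ m * L.totalDegree + g.totalDegree :=
        (totalDegree_mul _ _).trans (Nat.add_le_add_right (totalDegree_pow _ _) _)
    _ < _ := by have := le_totalDegree hd; omega

theorem extDelta_mem_normIdeal_of_totalDegree_lt
    {p1 : MultilinearMap A (fun _ : Fin n => MvPolynomial σ A) Γ} (hq : HasMulExpansion q p1)
    (hfac : IsUnit (n ! : A)) {V : Submodule A (MvPolynomial σ A)}
    (hV : ∀ p : MvPolynomial σ A, p.totalDegree < n → p ∈ V) (x y : Fin n → MvPolynomial σ A) :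
    extDelta p1 x y ∈ normIdeal p1 V := by
  classical
  induction hN : ∑ i, (x i).totalDegree + ∑ i, (y i).totalDegree
    using Nat.strong_induction_on generalizing x y with
  | _ N ih =>
  by_cases hx : ∃ j, n ≤ (x j).totalDegree
  · obtain ⟨j, hj⟩ := hx
    rw [← extDeltaLeft_apply]
    refine (hasMulExpansion_extDeltaLeft hq y).mem_of_forall_totalDegree_lt hfac _ x j hj
      fun z hz => ?_
    rw [extDeltaLeft_apply]
    exact ih _ (hN ▸ Nat.add_lt_add_right (sum_totalDegree_update_lt hz) _) _ _ rfl
  by_cases hy : ∃ j, n ≤ (y j).totalDegree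
  · obtain ⟨j, hj⟩ := hy
    rw [← extDeltaRight_apply]
    refine (hasMulExpansion_extDeltaRight hq x).mem_of_forall_totalDegree_lt hfac _ y j hj
      fun z hz => ?_
    rw [extDeltaRight_apply]
    exact ih _ (hN ▸ Nat.add_lt_add_left (sum_totalDegree_update_lt hz) _) _ _ rfl
  push Not at hx hy
  exact Ideal.subset_span ⟨x, y, fun i => hV _ (hx i), fun i => hV _ (hy i), rfl⟩

end Reduction

theorem normIdeal_low_degree_monomials_general {A Γn : Type*} [CommRing A]
    [CommRing Γn] [Algebra A Γn] {n : ℕ} (r : ℕ)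
    (p1 : MultilinearMap A (fun _ : Fin n => MvPolynomial (Fin r) A) Γn)
    (hfac : IsUnit ((n.factorial : A)))
    (q : ℕ → MvPolynomial (Fin r) A → Γn)
    (hq : ∀ (c : ℕ), c ≤ n → ∀ (f : MvPolynomial (Fin r) A) (w : Fin n → MvPolynomial (Fin r) A),
      q c f * p1 w =
        ∑ S ∈ Finset.univ.powersetCard c,
          p1 fun i => (if i ∈ S then f else 1) * w i) :
    normIdeal p1 (Submodule.span A
        {m : MvPolynomial (Fin r) A |
          ∃ d : Fin r →₀ ℕ, (d.sum fun _ e => e) < n ∧ m = MvPolynomial.monomial d 1}) =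
      normIdeal p1 (⊤ : Submodule A (MvPolynomial (Fin r) A)) := by
  refine le_antisymm (normIdeal_mono p1 le_top) (Ideal.span_le.mpr ?_)
  rintro _ ⟨x, y, -, -, rfl⟩
  exact extDelta_mem_normIdeal_of_totalDegree_lt hq hfac
    (fun _ hp => MvPolynomial.mem_span_monomial_of_totalDegree_lt hp) x y

/-- **Lemma 2.7 (second part).**  Let `F = A[T₁,…,T_r]` over a ring `A` in which `n!` is
invertible, and let `W ⊂ F` be the `A`-module spanned by the monomials of total degree
less than `n`.  Then `I_W = I_F` in `Γⁿ_A(F)`.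

Setup: `Γn` is `Γⁿ_A(F)` with its internal multiplication, `p1` the external product of
`n` degree-one divided powers (symmetric, `hsym`), `q c f = γᶜ(f) * γ^{n-c}(1)`, and `hq`
the Proposition 1.7 expansion of internal products `q c f ⋅ p1 w` used in the proof. -/
theorem normIdeal_low_degree_monomials {A Γn : Type*} [CommRing A]
    [CommRing Γn] [Algebra A Γn] {n : ℕ} (r : ℕ)
    (p1 : MultilinearMap A (fun _ : Fin n => MvPolynomial (Fin r) A) Γn)
    (hsym : ∀ (σ : Equiv.Perm (Fin n)) (z : Fin n → MvPolynomial (Fin r) A),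
      p1 (z ∘ σ) = p1 z)
    (hfac : IsUnit ((n.factorial : A)))
    (q : ℕ → MvPolynomial (Fin r) A → Γn)
    (hq : ∀ (c : ℕ), c ≤ n → ∀ (f : MvPolynomial (Fin r) A) (w : Fin n → MvPolynomial (Fin r) A),
      q c f * p1 w =
        ∑ S ∈ Finset.univ.powersetCard c,
          p1 fun i => (if i ∈ S then f else 1) * w i) :
    normIdeal p1 (Submodule.span A
        {m : MvPolynomial (Fin r) A |
          ∃ d : Fin r →₀ ℕ, (d.sum fun _ e => e) < n ∧ m = MvPolynomial.monomial d 1}) =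
      normIdeal p1 (⊤ : Submodule A (MvPolynomial (Fin r) A)) :=
  normIdeal_low_degree_monomials_general r p1 hfac q hq
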